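/- Commuting-conversion reduction is locally confluent: if t ⇝_cc u and t ⇝_cc u' in one step, then there exists a term v with u ⇝_cc* v and u' ⇝_cc* v; consequently (by strong normalisation and Newman's lemma), commuting-conversion reduction is confluent. -/

import Mathlib

namespace STLCp

/-- Types of the simply-typed λ-calculus with sums, over base types `B`. -/
inductive Ty (B : Type) : Type
  | base : B → Ty B
  | unit : Ty B
  | empty : Ty B
  | prod : Ty B → Ty B → Ty B
  | sum : Ty B → Ty B → Ty B
  | arr : Ty B → Ty B → Ty B

/-- Terms (de Bruijn style) over a set of constants `C`. -/
inductive Tm (C : Type) : Type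
  | cst : C → Tm C
  | var : Nat → Tm C
  | star : Tm C
  | pair : Tm C → Tm C → Tm C
  | proj1 : Tm C → Tm C
  | proj2 : Tm C → Tm C
  | lam : Tm C → Tm C
  | app : Tm C → Tm C → Tm C
  | inl : Tm C → Tm C
  | inr : Tm C → Tm C
  | raise : Tm C → Tm C
  | case : Tm C → Tm C → Tm C → Tm C

variable {B C : Type}

/-- Lifting a renaming under a binder. -/
def liftRen (ρ : Nat → Nat) : Nat → Nat
  | 0 => 0
  | n + 1 => ρ n + 1

/-- Action of renamings on terms. -/
def rename (ρ : Nat → Nat) : Tm C → Tm C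
  | .cst c => .cst c
  | .var n => .var (ρ n)
  | .star => .star
  | .pair t u => .pair (rename ρ t) (rename ρ u)
  | .proj1 t => .proj1 (rename ρ t)
  | .proj2 t => .proj2 (rename ρ t)
  | .lam t => .lam (rename (liftRen ρ) t)
  | .app t u => .app (rename ρ t) (rename ρ u)
  | .inl t => .inl (rename ρ t)
  | .inr t => .inr (rename ρ t)
  | .raise t => .raise (rename ρ t)
  | .case s bl br => .case (rename ρ s) (rename (liftRen ρ) bl) (rename (liftRen ρ) br)

/-- Lifting a parallel substitution under a binder. -/
def liftSub (σ : Nat → Tm C) : Nat → Tm C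
  | 0 => .var 0
  | n + 1 => rename Nat.succ (σ n)

/-- Action of parallel substitutions on terms, `t[σ]`. -/
def subst (σ : Nat → Tm C) : Tm C → Tm C
  | .cst c => .cst c
  | .var n => σ n
  | .star => .star
  | .pair t u => .pair (subst σ t) (subst σ u)
  | .proj1 t => .proj1 (subst σ t)
  | .proj2 t => .proj2 (subst σ t)
  | .lam t => .lam (subst (liftSub σ) t)
  | .app t u => .app (subst σ t) (subst σ u)
  | .inl t => .inl (subst σ t)
  | .inr t => .inr (subst σ t)
  | .raise t => .raise (subst σ t)
  | .case s bl br => .case (subst σ s) (subst (liftSub σ) bl) (subst (liftSub σ) br)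

/-- The substitution `u..`: maps the last variable to `u`, the identity elsewhere. -/
def sub0 (u : Tm C) : Nat → Tm C
  | 0 => u
  | n + 1 => .var n

/-- Eliminations: application, projections and case analysis. -/
inductive Elim (C : Type) : Type
  | eapp : Tm C → Elim C
  | eproj1 : Elim C
  | eproj2 : Elim C
  | ecase : Tm C → Tm C → Elim C

/-- Plugging a term into an elimination, `e[t]`. -/
def plug : Elim C → Tm C → Tm C
  | .eapp u, t => .app t u
  | .eproj1, t => .proj1 t
  | .eproj2, t => .proj2 t
  | .ecase bl br, t => .case t bl br

/-- Weakening the contents of an elimination (used when pushing it under a binder). -/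
def weakenElim : Elim C → Elim C
  | .eapp u => .eapp (rename Nat.succ u)
  | .eproj1 => .eproj1
  | .eproj2 => .eproj2
  | .ecase bl br => .ecase (rename (liftRen Nat.succ) bl) (rename (liftRen Nat.succ) br)

/-- The β-rules. -/
inductive BetaBase : Tm C → Tm C → Prop
  | proj1 (t u : Tm C) : BetaBase (.proj1 (.pair t u)) t
  | proj2 (t u : Tm C) : BetaBase (.proj2 (.pair t u)) u
  | app (t u : Tm C) : BetaBase (.app (.lam t) u) (subst (sub0 u) t)
  | case_inl (a bl br : Tm C) : BetaBase (.case (.inl a) bl br) (subst (sub0 a) bl)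
  | case_inr (b bl br : Tm C) : BetaBase (.case (.inr b) bl br) (subst (sub0 b) br)

/-- The commuting-conversion rules. -/
inductive CCBase : Tm C → Tm C → Prop
  | raise (e : Elim C) (t : Tm C) : CCBase (plug e (.raise t)) (.raise t)
  | case (e : Elim C) (s bl br : Tm C) :
      CCBase (plug e (.case s bl br))
        (.case s (plug (weakenElim e) bl) (plug (weakenElim e) br))

/-- Congruence closure of a base relation on terms. -/
inductive Cong (R : Tm C → Tm C → Prop) : Tm C → Tm C → Prop
  | base : R t u → Cong R t u
  | pairL : Cong R t t' → Cong R (.pair t u) (.pair t' u)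
  | pairR : Cong R u u' → Cong R (.pair t u) (.pair t u')
  | proj1 : Cong R t t' → Cong R (.proj1 t) (.proj1 t')
  | proj2 : Cong R t t' → Cong R (.proj2 t) (.proj2 t')
  | lam : Cong R t t' → Cong R (.lam t) (.lam t')
  | appL : Cong R t t' → Cong R (.app t u) (.app t' u)
  | appR : Cong R u u' → Cong R (.app t u) (.app t u')
  | inl : Cong R t t' → Cong R (.inl t) (.inl t')
  | inr : Cong R t t' → Cong R (.inr t) (.inr t')
  | raise : Cong R t t' → Cong R (.raise t) (.raise t')
  | caseS : Cong R s s' → Cong R (.case s bl br) (.case s' bl br)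
  | caseL : Cong R bl bl' → Cong R (.case s bl br) (.case s bl' br)
  | caseR : Cong R br br' → Cong R (.case s bl br) (.case s bl br')

/-- One-step β-reduction. -/
def StepBeta : Tm C → Tm C → Prop := Cong BetaBase

/-- One-step commuting-conversion reduction. -/
def StepCC : Tm C → Tm C → Prop := Cong CCBase

/-- One-step reduction (β-rules together with commuting conversions). -/
def Step : Tm C → Tm C → Prop := Cong (fun t u => BetaBase t u ∨ CCBase t u)

/-- Reflexive-transitive closures. -/
def RedsBeta : Tm C → Tm C → Prop := Relation.ReflTransGen StepBeta
def RedsCC : Tm C → Tm C → Prop := Relation.ReflTransGen StepCC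
def Reds : Tm C → Tm C → Prop := Relation.ReflTransGen Step

/-- Typing judgment `Γ ⊢ t : A` over a language given by `tyof : C → Ty B`.
Contexts are lists of types, the head being the last-bound variable. -/
inductive HasType (tyof : C → Ty B) : List (Ty B) → Tm C → Ty B → Prop
  | cst (Γ) (c : C) : HasType tyof Γ (.cst c) (tyof c)
  | var : Γ[n]? = some A → HasType tyof Γ (.var n) A
  | star : HasType tyof Γ .star .unit
  | pair : HasType tyof Γ t A → HasType tyof Γ u A' →
      HasType tyof Γ (.pair t u) (.prod A A')
  | proj1 : HasType tyof Γ p (.prod A A') → HasType tyof Γ (.proj1 p) A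
  | proj2 : HasType tyof Γ p (.prod A A') → HasType tyof Γ (.proj2 p) A'
  | lam : HasType tyof (A :: Γ) t A' → HasType tyof Γ (.lam t) (.arr A A')
  | app : HasType tyof Γ t (.arr A A') → HasType tyof Γ u A →
      HasType tyof Γ (.app t u) A'
  | raise : HasType tyof Γ t .empty → HasType tyof Γ (.raise t) A
  | inl : HasType tyof Γ a A → HasType tyof Γ (.inl a) (.sum A A')
  | inr : HasType tyof Γ b A' → HasType tyof Γ (.inr b) (.sum A A')
  | case : HasType tyof Γ s (.sum A A') → HasType tyof (A :: Γ) bl T →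
      HasType tyof (A' :: Γ) br T → HasType tyof Γ (.case s bl br) T

mutual
  /-- Bidirectional checking judgment `Γ ⊢ t ⇐ A` (normal forms). -/
  inductive Check (tyof : C → Ty B) : List (Ty B) → Tm C → Ty B → Prop
    | star : Check tyof Γ .star .unit
    | pair : Check tyof Γ t A → Check tyof Γ u A' →
        Check tyof Γ (.pair t u) (.prod A A')
    | lam : Check tyof (A :: Γ) t A' → Check tyof Γ (.lam t) (.arr A A')
    | inl : Check tyof Γ a A → Check tyof Γ (.inl a) (.sum A A')
    | inr : Check tyof Γ b A' → Check tyof Γ (.inr b) (.sum A A')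
    | demote : Infer tyof Γ t A → A = A' → Check tyof Γ t A'
    | raise : Infer tyof Γ t .empty → Check tyof Γ (.raise t) A
    | case : Infer tyof Γ s (.sum A A') → Check tyof (A :: Γ) bl T →
        Check tyof (A' :: Γ) br T → Check tyof Γ (.case s bl br) T

  /-- Bidirectional inference judgment `Γ ⊢ t ⇒ A` (neutral forms). -/
  inductive Infer (tyof : C → Ty B) : List (Ty B) → Tm C → Ty B → Prop
    | cst (Γ) (c : C) : Infer tyof Γ (.cst c) (tyof c)
    | var : Γ[n]? = some A → Infer tyof Γ (.var n) A
    | proj1 : Infer tyof Γ p (.prod A A') → Infer tyof Γ (.proj1 p) A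
    | proj2 : Infer tyof Γ p (.prod A A') → Infer tyof Γ (.proj2 p) A'
    | app : Infer tyof Γ t (.arr A A') → Check tyof Γ u A →
        Infer tyof Γ (.app t u) A'
end

/-- The substitution replacing the last variable by `inl` of itself
(used in the η-law for sums). -/
def inlSub : Nat → Tm C
  | 0 => .inl (.var 0)
  | n + 1 => .var (n + 1)

/-- The substitution replacing the last variable by `inr` of itself. -/
def inrSub : Nat → Tm C
  | 0 => .inr (.var 0)
  | n + 1 => .var (n + 1)

/-- Conversion `Γ ⊢ t ≡ u : A`: the least congruent equivalence relation on
well-typed terms containing the β and η laws for all type formers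
(the equational theory of bicartesian closed categories). -/
inductive Conv (tyof : C → Ty B) : List (Ty B) → Tm C → Tm C → Ty B → Prop
  | refl : HasType tyof Γ t A → Conv tyof Γ t t A
  | symm : Conv tyof Γ t u A → Conv tyof Γ u t A
  | trans : Conv tyof Γ t u A → Conv tyof Γ u v A → Conv tyof Γ t v A
  -- congruence
  | pair : Conv tyof Γ t t' A → Conv tyof Γ u u' A' →
      Conv tyof Γ (.pair t u) (.pair t' u') (.prod A A')
  | proj1 : Conv tyof Γ p p' (.prod A A') → Conv tyof Γ (.proj1 p) (.proj1 p') A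
  | proj2 : Conv tyof Γ p p' (.prod A A') → Conv tyof Γ (.proj2 p) (.proj2 p') A'
  | lam : Conv tyof (A :: Γ) t t' A' → Conv tyof Γ (.lam t) (.lam t') (.arr A A')
  | app : Conv tyof Γ t t' (.arr A A') → Conv tyof Γ u u' A →
      Conv tyof Γ (.app t u) (.app t' u') A'
  | inl : Conv tyof Γ a a' A → Conv tyof Γ (.inl a) (.inl a') (.sum A A')
  | inr : Conv tyof Γ b b' A' → Conv tyof Γ (.inr b) (.inr b') (.sum A A')
  | raise : Conv tyof Γ t t' .empty → Conv tyof Γ (.raise t) (.raise t') A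
  | case : Conv tyof Γ s s' (.sum A A') → Conv tyof (A :: Γ) bl bl' T →
      Conv tyof (A' :: Γ) br br' T →
      Conv tyof Γ (.case s bl br) (.case s' bl' br') T
  -- β laws
  | beta_proj1 : HasType tyof Γ t A → HasType tyof Γ u A' →
      Conv tyof Γ (.proj1 (.pair t u)) t A
  | beta_proj2 : HasType tyof Γ t A → HasType tyof Γ u A' →
      Conv tyof Γ (.proj2 (.pair t u)) u A'
  | beta_app : HasType tyof (A :: Γ) t A' → HasType tyof Γ u A →
      Conv tyof Γ (.app (.lam t) u) (subst (sub0 u) t) A'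
  | beta_inl : HasType tyof Γ a A → HasType tyof (A :: Γ) bl T →
      HasType tyof (A' :: Γ) br T →
      Conv tyof Γ (.case (.inl a) bl br) (subst (sub0 a) bl) T
  | beta_inr : HasType tyof Γ b A' → HasType tyof (A :: Γ) bl T →
      HasType tyof (A' :: Γ) br T →
      Conv tyof Γ (.case (.inr b) bl br) (subst (sub0 b) br) T
  -- η laws
  | eta_unit : HasType tyof Γ t .unit → Conv tyof Γ t .star .unit
  | eta_prod : HasType tyof Γ t (.prod A A') →
      Conv tyof Γ t (.pair (.proj1 t) (.proj2 t)) (.prod A A')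
  | eta_arr : HasType tyof Γ t (.arr A A') →
      Conv tyof Γ t (.lam (.app (rename Nat.succ t) (.var 0))) (.arr A A')
  | eta_empty : HasType tyof Γ s .empty → HasType tyof Γ u T →
      Conv tyof Γ u (.raise s) T
  | eta_sum : HasType tyof Γ s (.sum A A') → HasType tyof (.sum A A' :: Γ) u T →
      Conv tyof Γ (subst (sub0 s) u)
        (.case s (subst inlSub u) (subst inrSub u)) T

/-- `t` is covered by the predicate `F`: `t` is a case tree whose nodes are
eliminations of neutrals at positive types and whose leaves satisfy `F`
(in suitably extended contexts). -/
inductive Covered (tyof : C → Ty B) (F : List (Ty B) → Tm C → Prop) :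
    List (Ty B) → Tm C → Prop
  | leaf : F Γ t → Covered tyof F Γ t
  | raise : Infer tyof Γ n .empty → Covered tyof F Γ (.raise n)
  | case : Infer tyof Γ n (.sum A A') → Covered tyof F (A :: Γ) bl →
      Covered tyof F (A' :: Γ) br → Covered tyof F Γ (.case n bl br)

/-- `ρ` is a (typed) renaming from `Δ` to `Γ`. -/
def IsRen (ρ : Nat → Nat) (Δ Γ : List (Ty B)) : Prop :=
  ∀ n A, Γ[n]? = some A → Δ[ρ n]? = some A

/-- Values at a type, defined by induction on the type (logical relation). -/
def Value (tyof : C → Ty B) : Ty B → List (Ty B) → Tm C → Prop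
  | .base b => Covered tyof (fun Δ u => Infer tyof Δ u (.base b))
  | .empty => Covered tyof (fun Δ u => Infer tyof Δ u .empty)
  | .sum A A' => Covered tyof (fun Δ u =>
      Infer tyof Δ u (.sum A A') ∨
      (∃ a, u = .inl a ∧ Value tyof A Δ a) ∨
      (∃ b, u = .inr b ∧ Value tyof A' Δ b))
  | .unit => fun Γ t => Check tyof Γ t .unit
  | .prod A A' => fun Γ t => Check tyof Γ t (.prod A A') ∧
      (∃ v, Reds (.proj1 t) v ∧ Value tyof A Γ v) ∧
      (∃ v, Reds (.proj2 t) v ∧ Value tyof A' Γ v)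
  | .arr A A' => fun Γ t => Check tyof Γ t (.arr A A') ∧
      ∀ Δ ρ, IsRen ρ Δ Γ → ∀ u, Value tyof A Δ u →
        ∃ v, Reds (.app (rename ρ t) u) v ∧ Value tyof A' Δ v

/-- `t` is reducible at `T` in `Γ`: it reduces to a value at `T`. -/
def Reducible (tyof : C → Ty B) (T : Ty B) (Γ : List (Ty B)) (t : Tm C) : Prop :=
  ∃ v, Reds t v ∧ Value tyof T Γ v

/-- Polarised vocabulary of a type: `voc true A = A⁺`, `voc false A = A⁻`. -/
def voc (p : Bool) : Ty B → Set B
  | .base b => if p then {b} else ∅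
  | .unit => ∅
  | .empty => ∅
  | .prod A A' => voc p A ∪ voc p A'
  | .sum A A' => voc p A ∪ voc p A'
  | .arr A A' => voc (!p) A ∪ voc p A'

/-- Polarised vocabulary of a context. -/
def vocCtx (p : Bool) (Γ : List (Ty B)) : Set B :=
  {b | ∃ A ∈ Γ, b ∈ voc p A}

/-- Context partitions `Γ = Γs ⋈ Γt`. -/
inductive Splits {B : Type} : List (Ty B) → List (Ty B) → List (Ty B) → Type
  | nil : Splits [] [] []
  | left (A : Ty B) : Splits Γ Γs Γt → Splits (A :: Γ) (A :: Γs) Γt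
  | right (A : Ty B) : Splits Γ Γs Γt → Splits (A :: Γ) Γs (A :: Γt)

/-- The renaming embedding `Γs` into `Γ` induced by a partition. -/
def Splits.renS {B : Type} : {Γ Γs Γt : List (Ty B)} → Splits Γ Γs Γt → Nat → Nat
  | _, _, _, .nil => id
  | _, _, _, .left _ s => fun n => match n with | 0 => 0 | m + 1 => s.renS m + 1
  | _, _, _, .right _ s => fun n => s.renS n + 1

/-- The renaming embedding `Γt` into `Γ` induced by a partition. -/
def Splits.renT {B : Type} : {Γ Γs Γt : List (Ty B)} → Splits Γ Γs Γt → Nat → Nat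
  | _, _, _, .nil => id
  | _, _, _, .left _ s => fun n => s.renT n + 1
  | _, _, _, .right _ s => fun n => match n with | 0 => 0 | m + 1 => s.renT m + 1

/-- The composite `r[l..]` where `l` lives in one part of the context
(embedded via `ρl`) and the tail variables of `r` live in the other part
(embedded via `ρr`); the result lives in the full context. -/
def splice (ρl ρr : Nat → Nat) (l r : Tm C) : Tm C :=
  subst (fun n => match n with
    | 0 => rename ρl l
    | m + 1 => .var (ρr m)) r

/-- The (empty) constant-typing function for a language without constants. -/
def noCst {B : Type} : Empty → Ty B := fun c => c.elim

/-- The set of constants occurring in a term. -/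
def constsOf : Tm C → Set C
  | .cst c => {c}
  | .var _ => ∅
  | .star => ∅
  | .pair t u => constsOf t ∪ constsOf u
  | .proj1 t => constsOf t
  | .proj2 t => constsOf t
  | .lam t => constsOf t
  | .app t u => constsOf t ∪ constsOf u
  | .inl t => constsOf t
  | .inr t => constsOf t
  | .raise t => constsOf t
  | .case s bl br => constsOf s ∪ constsOf bl ∪ constsOf br


/-! Local confluence is a critical-pair analysis. Steps in disjoint subterms commute and steps
in the same subterm are joined inductively, so only a root conversion `e[raise t] ⇝ raise t` or
`e[ite s bl br] ⇝ ite s e[bl] e[br]` overlapping a step inside `e` or inside its argument needs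
work. The one substantial overlap is `e[ite (ite s l r) bl br]`, which both orders of
conversion take to `ite s (ite l e[bl] e[br]) (ite r e[bl] e[br])` (up to weakening).
Commuting conversions strictly decrease a multiplicative weight, so they terminate, and Newman's
lemma turns local confluence into confluence. -/

open Relation

theorem _root_.Relation.newman {α : Type*} {r : α → α → Prop} (hwf : WellFounded (flip r))
    (hlc : ∀ a b c, r a b → r a c → Join (ReflTransGen r) b c)
    {a b c : α} (hab : ReflTransGen r a b) (hac : ReflTransGen r a c) :
    Join (ReflTransGen r) b c := by
  induction a using hwf.induction generalizing b c with
  | _ a ih =>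
  rcases hab.cases_head with rfl | ⟨b₁, hab₁, hb₁b⟩
  · exact ⟨c, hac, .refl⟩
  rcases hac.cases_head with rfl | ⟨c₁, hac₁, hc₁c⟩
  · exact ⟨b, .refl, hab⟩
  obtain ⟨d, hb₁d, hc₁d⟩ := hlc a b₁ c₁ hab₁ hac₁
  obtain ⟨e, hbe, hde⟩ := ih b₁ hab₁ hb₁b hb₁d
  obtain ⟨f, hef, hcf⟩ := ih c₁ hac₁ (hc₁d.trans hde) hc₁c
  exact ⟨f, hbe.trans hef, hcf⟩

theorem _root_.Relation.Join.lift_reflTransGen {α β : Type*} {r : α → α → Prop}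
    {p : β → β → Prop} (f : α → β) (hf : ∀ a b, r a b → p (f a) (f b)) {a b : α}
    (h : Join (ReflTransGen r) a b) :
    Join (ReflTransGen p) (f a) (f b) :=
  let ⟨c, hac, hbc⟩ := h
  ⟨f c, ReflTransGen.lift f hf _ _ hac, ReflTransGen.lift f hf _ _ hbc⟩

theorem liftRen_comp (ρ σ : ℕ → ℕ) : liftRen ρ ∘ liftRen σ = liftRen (ρ ∘ σ) := by
  funext n; cases n <;> rfl

theorem rename_rename (ρ σ : ℕ → ℕ) (t : Tm C) :
    rename ρ (rename σ t) = rename (ρ ∘ σ) t := by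
  induction t generalizing ρ σ <;> simp_all [rename, liftRen_comp]

def renameElim (ρ : ℕ → ℕ) : Elim C → Elim C
  | .eapp u => .eapp (rename ρ u)
  | .eproj1 => .eproj1
  | .eproj2 => .eproj2
  | .ecase bl br => .ecase (rename (liftRen ρ) bl) (rename (liftRen ρ) br)

theorem weakenElim_eq_renameElim (e : Elim C) : weakenElim e = renameElim Nat.succ e := by
  cases e <;> rfl

theorem rename_plug (ρ : ℕ → ℕ) (e : Elim C) (t : Tm C) :
    rename ρ (plug e t) = plug (renameElim ρ e) (rename ρ t) := by
  cases e <;> rfl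

theorem weakenElim_renameElim (ρ : ℕ → ℕ) (e : Elim C) :
    weakenElim (renameElim ρ e) = renameElim (liftRen ρ) (weakenElim e) := by
  cases e <;> simp only [weakenElim, renameElim, rename_rename, liftRen_comp] <;> rfl

theorem rename_plug_weakenElim (e : Elim C) (t : Tm C) :
    rename (liftRen Nat.succ) (plug (weakenElim e) t)
      = plug (weakenElim (weakenElim e)) (rename (liftRen Nat.succ) t) := by
  rw [rename_plug, weakenElim_eq_renameElim e, weakenElim_renameElim,
    ← weakenElim_eq_renameElim]

theorem plug_injective {e e' : Elim C} {t t' : Tm C} (h : plug e t = plug e' t') :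
    e = e' ∧ t = t' := by
  cases e <;> cases e' <;> simp_all [plug]

theorem ccBase_iff {t u : Tm C} : CCBase t u ↔
    (∃ e r, t = plug e (.raise r) ∧ u = .raise r) ∨
    (∃ e s bl br, t = plug e (.case s bl br) ∧
      u = .case s (plug (weakenElim e) bl) (plug (weakenElim e) br)) := by
  refine ⟨fun h => ?_, ?_⟩
  · cases h with
    | raise e r => exact .inl ⟨e, r, rfl, rfl⟩
    | case e s bl br => exact .inr ⟨e, s, bl, br, rfl, rfl⟩
  · rintro (⟨e, r, rfl, rfl⟩ | ⟨e, s, bl, br, rfl, rfl⟩)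
    exacts [.raise e r, .case e s bl br]

theorem CCBase.unique {t u u' : Tm C} (h : CCBase t u) (h' : CCBase t u') : u = u' := by
  rcases ccBase_iff.1 h with ⟨e, r, rfl, rfl⟩ | ⟨e, s, bl, br, rfl, rfl⟩ <;>
    rcases ccBase_iff.1 h' with ⟨e', r', he, rfl⟩ | ⟨e', s', bl', br', he, rfl⟩ <;>
    obtain ⟨rfl, he⟩ := plug_injective he <;> simp_all

theorem CCBase.case_inv {s bl br u : Tm C} (h : CCBase (.case s bl br) u) :
    (∃ t, s = .raise t ∧ u = .raise t) ∨
    (∃ s' bl' br', s = .case s' bl' br' ∧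
      u = .case s' (.case bl' (rename (liftRen Nat.succ) bl) (rename (liftRen Nat.succ) br))
        (.case br' (rename (liftRen Nat.succ) bl) (rename (liftRen Nat.succ) br))) := by
  rcases ccBase_iff.1 h with ⟨e, t, he, rfl⟩ | ⟨e, s', bl', br', he, rfl⟩ <;>
    cases e <;> cases he
  · exact .inl ⟨t, rfl, rfl⟩
  · exact .inr ⟨s', bl', br', rfl, rfl⟩

theorem CCBase.rename {t u : Tm C} (ρ : ℕ → ℕ) (h : CCBase t u) :
    CCBase (rename ρ t) (rename ρ u) := by
  cases h with
  | raise e t =>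
    rw [rename_plug]
    exact .raise _ _
  | case e s bl br =>
    simp only [rename_plug, STLCp.rename, ← weakenElim_renameElim]
    exact .case _ _ _ _

theorem StepCC.rename {t u : Tm C} (ρ : ℕ → ℕ) (h : StepCC t u) :
    StepCC (rename ρ t) (rename ρ u) := by
  induction h generalizing ρ with
  | base h => exact .base (h.rename ρ)
  | pairL _ ih => exact .pairL (ih ρ)
  | pairR _ ih => exact .pairR (ih ρ)
  | proj1 _ ih => exact .proj1 (ih ρ)
  | proj2 _ ih => exact .proj2 (ih ρ)
  | lam _ ih => exact .lam (ih (liftRen ρ))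
  | appL _ ih => exact .appL (ih ρ)
  | appR _ ih => exact .appR (ih ρ)
  | inl _ ih => exact .inl (ih ρ)
  | inr _ ih => exact .inr (ih ρ)
  | raise _ ih => exact .raise (ih ρ)
  | caseS _ ih => exact .caseS (ih ρ)
  | caseL _ ih => exact .caseL (ih (liftRen ρ))
  | caseR _ ih => exact .caseR (ih (liftRen ρ))

inductive ElimStep : Elim C → Elim C → Prop
  | app {u u' : Tm C} : StepCC u u' → ElimStep (.eapp u) (.eapp u')
  | caseL {bl bl' br : Tm C} : StepCC bl bl' → ElimStep (.ecase bl br) (.ecase bl' br)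
  | caseR {bl br br' : Tm C} : StepCC br br' → ElimStep (.ecase bl br) (.ecase bl br')

theorem ElimStep.weakenElim {e e' : Elim C} (h : ElimStep e e') :
    ElimStep (weakenElim e) (weakenElim e') := by
  cases h with
  | app h => exact .app (h.rename _)
  | caseL h => exact .caseL (h.rename _)
  | caseR h => exact .caseR (h.rename _)

theorem ElimStep.stepCC_plug {e e' : Elim C} (h : ElimStep e e') (t : Tm C) :
    StepCC (plug e t) (plug e' t) := by
  cases h with
  | app h => exact .appR h
  | caseL h => exact .caseL h
  | caseR h => exact .caseR h

theorem StepCC.plug {t t' : Tm C} (e : Elim C) (h : StepCC t t') :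
    StepCC (plug e t) (plug e t') := by
  cases e with
  | eapp u => exact .appL h
  | eproj1 => exact .proj1 h
  | eproj2 => exact .proj2 h
  | ecase bl br => exact .caseS h

theorem stepCC_plug_cases {e : Elim C} {t w : Tm C} (h : StepCC (plug e t) w) :
    CCBase (plug e t) w ∨ (∃ t', StepCC t t' ∧ w = plug e t') ∨
      (∃ e', ElimStep e e' ∧ w = plug e' t) := by
  cases e <;> cases h
  all_goals first
    | exact .inl ‹_›
    | exact .inr (.inl ⟨_, ‹_›, rfl⟩)
    | exact .inr (.inr ⟨_, .app ‹_›, rfl⟩)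
    | exact .inr (.inr ⟨_, .caseL ‹_›, rfl⟩)
    | exact .inr (.inr ⟨_, .caseR ‹_›, rfl⟩)

theorem join_plug_raise {e : Elim C} {t w : Tm C} (hw : StepCC (plug e (.raise t)) w) :
    Join RedsCC (.raise t) w := by
  rcases stepCC_plug_cases hw with hroot | ⟨_, ht, rfl⟩ | ⟨e', -, rfl⟩
  · rw [(CCBase.raise e t).unique hroot]
    exact ⟨_, .refl, .refl⟩
  · cases ht with
    | base h => rcases ccBase_iff.1 h with ⟨e, _, he, -⟩ | ⟨e, _, _, _, he, -⟩ <;>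
        cases e <;> cases he
    | raise h => exact ⟨_, .single (.raise h), .single (.base (.raise e _))⟩
  · exact ⟨_, .refl, .single (.base (.raise e' t))⟩

theorem join_case_plug_case (e : Elim C) (s l r bl br : Tm C) :
    Join RedsCC (.case (.case s l r) (plug (weakenElim e) bl) (plug (weakenElim e) br))
      (plug e (.case s
        (.case l (rename (liftRen Nat.succ) bl) (rename (liftRen Nat.succ) br))
        (.case r (rename (liftRen Nat.succ) bl) (rename (liftRen Nat.succ) br)))) := by
  set bl₁ := rename (liftRen Nat.succ) bl
  set br₁ := rename (liftRen Nat.succ) br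
  set e₂ := weakenElim (weakenElim e)
  refine ⟨.case s (.case l (plug e₂ bl₁) (plug e₂ br₁)) (.case r (plug e₂ bl₁) (plug e₂ br₁)),
    .single ?_, ?_⟩
  · have h := CCBase.case (.ecase (plug (weakenElim e) bl) (plug (weakenElim e) br)) s l r
    simp only [plug.eq_4, weakenElim.eq_4, rename_plug_weakenElim] at h
    exact .base h
  · refine .head (.base (.case e s _ _)) (.head (.caseL (.base (.case _ l bl₁ br₁))) ?_)
    exact .single (.caseR (.base (.case (weakenElim e) r bl₁ br₁)))

theorem join_plug_case {e : Elim C} {s bl br w : Tm C}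
    (hw : StepCC (plug e (.case s bl br)) w) :
    Join RedsCC (.case s (plug (weakenElim e) bl) (plug (weakenElim e) br)) w := by
  rcases stepCC_plug_cases hw with hroot | ⟨_, ht, rfl⟩ | ⟨e', he', rfl⟩
  · rw [(CCBase.case e s bl br).unique hroot]
    exact ⟨_, .refl, .refl⟩
  · cases ht with
    | base h =>
      rcases h.case_inv with ⟨r, rfl, rfl⟩ | ⟨s', l, r, rfl, rfl⟩
      · exact ⟨_, .single (.base (.raise (.ecase _ _) r)), .single (.base (.raise e r))⟩
      · exact join_case_plug_case e s' l r bl br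
    | caseS h => exact ⟨_, .single (.caseS h), .single (.base (.case e _ bl br))⟩
    | caseL h =>
      exact ⟨_, .single (.caseL (StepCC.plug _ h)), .single (.base (.case e s _ br))⟩
    | caseR h =>
      exact ⟨_, .single (.caseR (StepCC.plug _ h)), .single (.base (.case e s bl _))⟩
  · have he₁ := he'.weakenElim
    exact ⟨_, .head (.caseL (he₁.stepCC_plug bl)) (.single (.caseR (he₁.stepCC_plug br))),
      .single (.base (.case e' s bl br))⟩

theorem CCBase.join_stepCC {t u w : Tm C} (hu : CCBase t u) (hw : StepCC t w) :
    Join RedsCC u w := by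
  cases hu with
  | raise e t => exact join_plug_raise hw
  | case e s bl br => exact join_plug_case hw

theorem StepCC.join : ∀ {t u₁ u₂ : Tm C}, StepCC t u₁ → StepCC t u₂ → Join RedsCC u₁ u₂
  | _, _, _, .base h, h₂ => h.join_stepCC h₂
  | _, _, _, h₁, .base h => symm (h.join_stepCC h₁)
  | _, _, _, .pairL h, .pairL h' =>
    (StepCC.join h h').lift_reflTransGen (Tm.pair · _) fun _ _ => Cong.pairL
  | _, _, _, .pairL h, .pairR h' => ⟨_, .single (.pairR h'), .single (.pairL h)⟩
  | _, _, _, .pairR h, .pairL h' => ⟨_, .single (.pairL h'), .single (.pairR h)⟩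
  | _, _, _, .pairR h, .pairR h' =>
    (StepCC.join h h').lift_reflTransGen (Tm.pair _ ·) fun _ _ => Cong.pairR
  | _, _, _, .proj1 h, .proj1 h' =>
    (StepCC.join h h').lift_reflTransGen Tm.proj1 fun _ _ => Cong.proj1
  | _, _, _, .proj2 h, .proj2 h' =>
    (StepCC.join h h').lift_reflTransGen Tm.proj2 fun _ _ => Cong.proj2
  | _, _, _, .lam h, .lam h' =>
    (StepCC.join h h').lift_reflTransGen Tm.lam fun _ _ => Cong.lam
  | _, _, _, .appL h, .appL h' =>
    (StepCC.join h h').lift_reflTransGen (Tm.app · _) fun _ _ => Cong.appL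
  | _, _, _, .appL h, .appR h' => ⟨_, .single (.appR h'), .single (.appL h)⟩
  | _, _, _, .appR h, .appL h' => ⟨_, .single (.appL h'), .single (.appR h)⟩
  | _, _, _, .appR h, .appR h' =>
    (StepCC.join h h').lift_reflTransGen (Tm.app _ ·) fun _ _ => Cong.appR
  | _, _, _, .inl h, .inl h' =>
    (StepCC.join h h').lift_reflTransGen Tm.inl fun _ _ => Cong.inl
  | _, _, _, .inr h, .inr h' =>
    (StepCC.join h h').lift_reflTransGen Tm.inr fun _ _ => Cong.inr
  | _, _, _, .raise h, .raise h' =>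
    (StepCC.join h h').lift_reflTransGen Tm.raise fun _ _ => Cong.raise
  | _, _, _, .caseS h, .caseS h' =>
    (StepCC.join h h').lift_reflTransGen (Tm.case · _ _) fun _ _ => Cong.caseS
  | _, _, _, .caseS h, .caseL h' => ⟨_, .single (.caseL h'), .single (.caseS h)⟩
  | _, _, _, .caseS h, .caseR h' => ⟨_, .single (.caseR h'), .single (.caseS h)⟩
  | _, _, _, .caseL h, .caseS h' => ⟨_, .single (.caseS h'), .single (.caseL h)⟩
  | _, _, _, .caseL h, .caseL h' =>
    (StepCC.join h h').lift_reflTransGen (Tm.case _ · _) fun _ _ => Cong.caseL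
  | _, _, _, .caseL h, .caseR h' => ⟨_, .single (.caseR h'), .single (.caseL h)⟩
  | _, _, _, .caseR h, .caseS h' => ⟨_, .single (.caseS h'), .single (.caseR h)⟩
  | _, _, _, .caseR h, .caseL h' => ⟨_, .single (.caseL h'), .single (.caseR h)⟩
  | _, _, _, .caseR h, .caseR h' =>
    (StepCC.join h h').lift_reflTransGen (Tm.case _ _ ·) fun _ _ => Cong.caseR

/-- Plugging into an elimination multiplies the weight by a factor `≥ 2`: the `raise` rule drops
the factor, and the `case` rule replaces `s * (l + r + 1) * k` by `s * (l * k + r * k + 1)`. -/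
def weight : Tm C → ℕ
  | .cst _ => 1
  | .var _ => 1
  | .star => 1
  | .pair t u => weight t + weight u + 1
  | .proj1 t => weight t * 2
  | .proj2 t => weight t * 2
  | .lam t => weight t + 1
  | .app t u => weight t * (weight u + 1)
  | .inl t => weight t + 1
  | .inr t => weight t + 1
  | .raise t => weight t + 1
  | .case s bl br => weight s * (weight bl + weight br + 1)

def Elim.weight : Elim C → ℕ
  | .eapp u => STLCp.weight u + 1
  | .eproj1 => 2
  | .eproj2 => 2
  | .ecase bl br => STLCp.weight bl + STLCp.weight br + 1

theorem weight_pos (t : Tm C) : 0 < weight t := by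
  induction t <;> simp [weight, *]

theorem weight_rename (ρ : ℕ → ℕ) (t : Tm C) : weight (rename ρ t) = weight t := by
  induction t generalizing ρ <;> simp [weight, rename, *]

theorem weight_plug (e : Elim C) (t : Tm C) : weight (plug e t) = weight t * e.weight := by
  cases e <;> rfl

theorem Elim.two_le_weight (e : Elim C) : 2 ≤ e.weight := by
  cases e <;> simp [Elim.weight, weight_pos, Nat.succ_le_of_lt]

theorem weight_weakenElim (e : Elim C) : (weakenElim e).weight = e.weight := by
  cases e <;> simp [weakenElim, Elim.weight, weight_rename]

theorem CCBase.weight_lt {t u : Tm C} (h : CCBase t u) : weight u < weight t := by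
  cases h with
  | raise e t =>
    rw [weight_plug]
    nlinarith [weight_pos (.raise t), e.two_le_weight]
  | case e s bl br =>
    simp only [weight_plug, weight, weight_weakenElim]
    nlinarith [weight_pos s, e.two_le_weight]

theorem StepCC.weight_lt {t u : Tm C} (h : StepCC t u) : weight u < weight t := by
  induction h with
  | base h => exact h.weight_lt
  | appL _ ih | caseS _ ih =>
    simp only [weight]; exact Nat.mul_lt_mul_of_pos_right ih (by omega)
  | appR _ ih | caseL _ ih | caseR _ ih =>
    simp only [weight]; exact Nat.mul_lt_mul_of_pos_left (by omega) (weight_pos _)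
  | _ => simp only [weight]; omega

theorem wellFounded_flip_stepCC : WellFounded (flip (StepCC (C := C))) :=
  Subrelation.wf (fun h => h.weight_lt) (measure weight).wf

/-- **Local confluence of commuting conversions**, and, as a consequence
(by strong normalisation and Newman's lemma), **confluence** of
commuting-conversion reduction. -/
theorem cc_locally_confluent_and_confluent {C : Type} :
    (∀ t u u' : Tm C, StepCC t u → StepCC t u' →
      ∃ v : Tm C, RedsCC u v ∧ RedsCC u' v) ∧
    (∀ t u u' : Tm C, RedsCC t u → RedsCC t u' →
      ∃ v : Tm C, RedsCC u v ∧ RedsCC u' v) :=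
  ⟨fun _ _ _ => StepCC.join,
    fun _ _ _ => newman wellFounded_flip_stepCC fun _ _ _ => StepCC.join⟩

end STLCp
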